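/- Let H be a real Hilbert space, let f_1,…,f_k : H → ℝ be locally Lipschitz near every point of H, let x ∈ H and ε ≥ 0. Let v̄ ∈ H be such that −v̄ ∈ F_ε(x) and ‖v̄‖ ≤ ‖w‖ for all w ∈ F_ε(x) (i.e., v̄ is, up to sign, the element of minimal norm in −F_ε(x)). Then for every t ≥ 0 with t·‖v̄‖ ≤ ε and every i ∈ {1,…,k}: f_i(x + t·v̄) ≤ f_i(x) − t·‖v̄‖². -/

import Mathlib

open Filter Topology RealInnerProductSpace

/-- Clarke generalized directional derivative
`f°(x;v) = limsup_{y→x, t↓0} (f(y+tv) − f(y))/t`. -/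
noncomputable def clarkeDir {H : Type*} [NormedAddCommGroup H] [InnerProductSpace ℝ H]
    (f : H → ℝ) (x v : H) : ℝ :=
  limsup (fun p : H × ℝ => (f (p.1 + p.2 • v) - f p.1) / p.2)
    ((𝓝 x) ×ˢ (𝓝[>] (0 : ℝ)))

/-- Clarke subdifferential, with the dual of `H` identified with `H` via the Riesz map:
`∂f(x) = {w : ⟪w, v⟫ ≤ f°(x;v) for all v}`. -/
def clarkeSubdiff {H : Type*} [NormedAddCommGroup H] [InnerProductSpace ℝ H]
    (f : H → ℝ) (x : H) : Set H :=
  {w : H | ∀ v : H, ⟪w, v⟫ ≤ clarkeDir f x v}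

/-- Goldstein ε-subdifferential
`∂_ε f(x) = closure (convexHull (⋃_{y ∈ closedBall x ε} ∂f(y)))`. -/
def goldsteinSubdiff {H : Type*} [NormedAddCommGroup H] [InnerProductSpace ℝ H]
    (f : H → ℝ) (ε : ℝ) (x : H) : Set H :=
  closure (convexHull ℝ (⋃ y ∈ Metric.closedBall x ε, clarkeSubdiff f y))

/-- `f` is locally Lipschitz near `x`: Lipschitz on some open ball around `x`. -/
def LocallyLipschitzNear {H : Type*} [NormedAddCommGroup H]
    (f : H → ℝ) (x : H) : Prop :=
  ∃ ε > 0, ∃ L : NNReal, LipschitzOnWith L f (Metric.ball x ε)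

/-- Multiobjective ε-subdifferential `F_ε(x) = closure (convexHull (⋃ i, ∂_ε f_i(x)))`. -/
def multiSubdiff {H : Type*} [NormedAddCommGroup H] [InnerProductSpace ℝ H]
    {k : ℕ} (f : Fin k → H → ℝ) (ε : ℝ) (x : H) : Set H :=
  closure (convexHull ℝ (⋃ i : Fin k, goldsteinSubdiff (f i) ε x))

/-- The weak topology on `H`: the topology induced by the functionals `⟪·, v⟫`, `v : H`. -/
noncomputable def weakTopology (H : Type*) [NormedAddCommGroup H] [InnerProductSpace ℝ H] :
    TopologicalSpace H :=
  ⨅ v : H, TopologicalSpace.induced (fun x : H => ⟪x, v⟫) inferInstance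

/-!
Since `-v̄` is the point of minimal norm of the convex set `F_ε(x)`, the variational
inequality of the projection gives `⟪w, v̄⟫ ≤ -‖v̄‖²` for every `w ∈ F_ε(x)`. The Clarke
derivative `f°(y; ·)` of a locally Lipschitz function is sublinear, so by Hahn–Banach and the
Riesz map it is attained in direction `v̄` by a Clarke subgradient at `y`, which belongs to
`F_ε(x)` when `‖y - x‖ ≤ ε`. Hence `f_i°(x + s v̄; v̄) ≤ -‖v̄‖²` for `0 ≤ s ≤ t`; this bounds
the right Dini derivative of `s ↦ f_i(x + s v̄)`, and a comparison argument gives the descent.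
-/

open Metric Set

section Quotient

variable {H : Type*} [NormedAddCommGroup H]

theorem LocallyLipschitzNear.continuousAt {f : H → ℝ} {y : H} (hf : LocallyLipschitzNear f y) :
    ContinuousAt f y := by
  obtain ⟨δ, hδ, L, hL⟩ := hf
  exact hL.continuousOn.continuousAt (ball_mem_nhds y hδ)

variable [NormedSpace ℝ H]

noncomputable def clarkeQuotient (f : H → ℝ) (v : H) (p : H × ℝ) : ℝ :=
  (f (p.1 + p.2 • v) - f p.1) / p.2

def clarkeFilter (y : H) : Filter (H × ℝ) :=
  𝓝 y ×ˢ 𝓝[>] 0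

instance clarkeFilter.neBot (y : H) : (clarkeFilter y).NeBot := by
  unfold clarkeFilter
  infer_instance

theorem tendsto_clarkeFilter_shift (y v : H) :
    Tendsto (fun p : H × ℝ => (p.1 + p.2 • v, p.2)) (clarkeFilter y) (clarkeFilter y) := by
  refine Tendsto.prodMk ?_ tendsto_snd
  have hcont : Tendsto (fun p : H × ℝ => p.1 + p.2 • v) (𝓝 (y, 0)) (𝓝 y) := by
    simpa using (by fun_prop : Continuous fun p : H × ℝ => p.1 + p.2 • v).tendsto (y, 0)
  refine hcont.mono_left ?_
  rw [clarkeFilter, nhds_prod_eq]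
  exact prod_mono le_rfl nhdsWithin_le_nhds

theorem LocallyLipschitzNear.exists_eventually_abs_clarkeQuotient_le {f : H → ℝ} {y : H}
    (hf : LocallyLipschitzNear f y) :
    ∃ C : ℝ, ∀ v : H, ∀ᶠ p in clarkeFilter y, |clarkeQuotient f v p| ≤ C * ‖v‖ := by
  obtain ⟨δ, hδ, L, hL⟩ := hf
  refine ⟨L, fun v => ?_⟩
  have hball : ball y δ ∈ 𝓝 y := ball_mem_nhds y hδ
  filter_upwards [(tendsto_fst.comp (tendsto_clarkeFilter_shift y v)).eventually_mem hball,
    (tendsto_fst (g := 𝓝[>] (0 : ℝ))).eventually_mem hball,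
    (tendsto_snd (f := 𝓝 y)).eventually_mem self_mem_nhdsWithin] with p hshift hp ht
  have hshift : p.1 + p.2 • v ∈ ball y δ := hshift
  have ht : 0 < p.2 := ht
  have hdist := hL.dist_le_mul _ hshift _ hp
  rw [Real.dist_eq, dist_eq_norm, add_sub_cancel_left, norm_smul, Real.norm_of_nonneg ht.le]
    at hdist
  rw [clarkeQuotient, abs_div, abs_of_pos ht, div_le_iff₀ ht]
  linarith

theorem LocallyLipschitzNear.isBoundedUnder_abs_clarkeQuotient {f : H → ℝ} {y : H}
    (hf : LocallyLipschitzNear f y) (v : H) :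
    IsBoundedUnder (· ≤ ·) (clarkeFilter y) fun p => |clarkeQuotient f v p| := by
  obtain ⟨C, hC⟩ := hf.exists_eventually_abs_clarkeQuotient_le
  exact isBoundedUnder_of_eventually_le (hC v)

theorem LocallyLipschitzNear.isBoundedUnder_le_clarkeQuotient {f : H → ℝ} {y : H}
    (hf : LocallyLipschitzNear f y) (v : H) :
    IsBoundedUnder (· ≤ ·) (clarkeFilter y) (clarkeQuotient f v) :=
  (isBoundedUnder_le_abs.1 (hf.isBoundedUnder_abs_clarkeQuotient v)).1

theorem LocallyLipschitzNear.isBoundedUnder_ge_clarkeQuotient {f : H → ℝ} {y : H}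
    (hf : LocallyLipschitzNear f y) (v : H) :
    IsBoundedUnder (· ≥ ·) (clarkeFilter y) (clarkeQuotient f v) :=
  (isBoundedUnder_le_abs.1 (hf.isBoundedUnder_abs_clarkeQuotient v)).2

end Quotient

section ClarkeDir

variable {H : Type*} [NormedAddCommGroup H] [InnerProductSpace ℝ H] {f : H → ℝ} {y : H}

theorem clarkeDir_eq_limsup (f : H → ℝ) (y v : H) :
    clarkeDir f y v = limsup (clarkeQuotient f v) (clarkeFilter y) :=
  rfl

theorem clarkeDir_zero_right (f : H → ℝ) (y : H) : clarkeDir f y 0 = 0 := by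
  have : clarkeQuotient f (0 : H) = fun _ => 0 := by
    funext p
    simp [clarkeQuotient]
  rw [clarkeDir_eq_limsup, this, limsup_const]

theorem LocallyLipschitzNear.exists_clarkeDir_le (hf : LocallyLipschitzNear f y) :
    ∃ C : ℝ, ∀ v : H, clarkeDir f y v ≤ C * ‖v‖ := by
  obtain ⟨C, hC⟩ := hf.exists_eventually_abs_clarkeQuotient_le
  refine ⟨C, fun v => limsup_le_of_le
    (hf.isBoundedUnder_ge_clarkeQuotient v).isCoboundedUnder_le ?_⟩
  filter_upwards [hC v] with p hp using (abs_le.1 hp).2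

theorem LocallyLipschitzNear.clarkeDir_smul_of_pos (hf : LocallyLipschitzNear f y) {c : ℝ}
    (hc : 0 < c) (v : H) : clarkeDir f y (c • v) = c * clarkeDir f y v := by
  -- substituting `t = c * t'` rescales the quotient by `c` and leaves `𝓝[>] 0` unchanged
  have hquot : clarkeQuotient f (c • v) =
      ((c * ·) ∘ clarkeQuotient f v) ∘ Prod.map id (c * ·) := by
    funext p
    simp only [clarkeQuotient, Function.comp_apply, Prod.map_fst, Prod.map_snd, id, smul_smul,
      mul_comm p.2 c]
    rw [mul_div_assoc', mul_div_mul_left _ _ hc.ne']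
  have hmap : map (Prod.map id (c * ·)) (clarkeFilter y) = clarkeFilter y := by
    have hGT : map (c * ·) (𝓝[>] (0 : ℝ)) = 𝓝[>] 0 := by
      conv_lhs => rw [← comap_mulLeft_nhdsGT_zero hc]
      exact map_comap_of_surjective (mul_left_surjective₀ hc.ne') _
    rw [clarkeFilter, ← prod_map_right, hGT]
  rw [clarkeDir_eq_limsup, hquot, limsup_comp, hmap, clarkeDir_eq_limsup]
  exact ((strictMono_mul_left_of_pos hc).monotone.map_limsup_of_continuousAt _
    (continuous_const_mul c).continuousAt (hf.isBoundedUnder_le_clarkeQuotient v)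
    (hf.isBoundedUnder_ge_clarkeQuotient v).isCoboundedUnder_le).symm

theorem LocallyLipschitzNear.clarkeDir_add_le (hf : LocallyLipschitzNear f y) (u v : H) :
    clarkeDir f y (u + v) ≤ clarkeDir f y u + clarkeDir f y v := by
  set ψ := fun p : H × ℝ => (p.1 + p.2 • v, p.2)
  have hψ : Tendsto ψ (clarkeFilter y) (clarkeFilter y) := tendsto_clarkeFilter_shift y v
  have hquot : clarkeQuotient f (u + v) = clarkeQuotient f u ∘ ψ + clarkeQuotient f v := by
    funext p
    simp only [clarkeQuotient, ψ, Pi.add_apply, Function.comp_apply, smul_add, ← add_div]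
    rw [add_comm (p.2 • u), ← add_assoc]
    ring
  have hle : IsBoundedUnder (· ≤ ·) (clarkeFilter y) (clarkeQuotient f u ∘ ψ) :=
    (hf.isBoundedUnder_le_clarkeQuotient u).mono (f := map ψ (clarkeFilter y)) hψ
  have hge : IsBoundedUnder (· ≥ ·) (clarkeFilter y) (clarkeQuotient f u ∘ ψ) :=
    (hf.isBoundedUnder_ge_clarkeQuotient u).mono (f := map ψ (clarkeFilter y)) hψ
  rw [clarkeDir_eq_limsup, hquot]
  refine (limsup_add_le hge hle (hf.isBoundedUnder_ge_clarkeQuotient v).isCoboundedUnder_le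
    (hf.isBoundedUnder_le_clarkeQuotient v)).trans (add_le_add ?_ le_rfl)
  exact hψ.limsup_comp_le_limsup hge.isCoboundedUnder_le (hf.isBoundedUnder_le_clarkeQuotient u)

theorem LocallyLipschitzNear.neg_clarkeDir_le (hf : LocallyLipschitzNear f y) (v : H) :
    -clarkeDir f y v ≤ clarkeDir f y (-v) := by
  have := hf.clarkeDir_add_le v (-v)
  rw [add_neg_cancel, clarkeDir_zero_right] at this
  linarith

theorem LocallyLipschitzNear.eventually_lt_of_clarkeDir_lt (hf : LocallyLipschitzNear f y)
    {v : H} {r : ℝ} (h : clarkeDir f y v < r) :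
    ∀ᶠ s in 𝓝[>] 0, (f (y + s • v) - f y) / s < r := by
  have hy : Tendsto (fun s : ℝ => (y, s)) (𝓝[>] 0) (clarkeFilter y) :=
    tendsto_const_nhds.prodMk tendsto_id
  exact hy.eventually (eventually_lt_of_limsup_lt h (hf.isBoundedUnder_le_clarkeQuotient v))

end ClarkeDir

section Subgradient

variable {H : Type*} [NormedAddCommGroup H] [InnerProductSpace ℝ H] {f : H → ℝ} {y : H}

theorem LocallyLipschitzNear.exists_linearMap_le_clarkeDir (hf : LocallyLipschitzNear f y)
    {v : H} (hv : v ≠ 0) :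
    ∃ g : H →ₗ[ℝ] ℝ, g v = clarkeDir f y v ∧ ∀ z, g z ≤ clarkeDir f y z := by
  set pf : H →ₗ.[ℝ] ℝ := LinearPMap.mkSpanSingleton v (clarkeDir f y v) hv
  have hpf : ∀ z : pf.domain, pf z ≤ clarkeDir f y z := by
    rintro ⟨z, hz⟩
    obtain ⟨c, rfl⟩ := Submodule.mem_span_singleton.1 hz
    rw [LinearPMap.mkSpanSingleton'_apply, RingHom.id_apply, smul_eq_mul]
    change c * clarkeDir f y v ≤ clarkeDir f y (c • v)
    rcases lt_trichotomy c 0 with hc | rfl | hc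
    · rw [← neg_neg c, neg_smul, ← smul_neg, hf.clarkeDir_smul_of_pos (neg_pos.2 hc)]
      nlinarith [hf.neg_clarkeDir_le v]
    · simp [clarkeDir_zero_right]
    · rw [hf.clarkeDir_smul_of_pos hc]
  obtain ⟨g, hg_ext, hg_le⟩ := exists_extension_of_le_sublinear pf (clarkeDir f y)
    (fun c hc z => hf.clarkeDir_smul_of_pos hc z) hf.clarkeDir_add_le hpf
  refine ⟨g, ?_, hg_le⟩
  have hv_mem : v ∈ pf.domain := Submodule.mem_span_singleton_self v
  exact (hg_ext ⟨v, hv_mem⟩).trans (LinearPMap.mkSpanSingleton'_apply_self _ _ _ _)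

theorem LocallyLipschitzNear.exists_mem_clarkeSubdiff_inner_eq [CompleteSpace H]
    (hf : LocallyLipschitzNear f y) {v : H} (hv : v ≠ 0) :
    ∃ w ∈ clarkeSubdiff f y, ⟪w, v⟫ = clarkeDir f y v := by
  obtain ⟨g, hgv, hg_le⟩ := hf.exists_linearMap_le_clarkeDir hv
  obtain ⟨C, hC⟩ := hf.exists_clarkeDir_le
  have hg_bound : ∀ z, ‖g z‖ ≤ C * ‖z‖ := by
    intro z
    have := (hg_le (-z)).trans (hC (-z))
    rw [map_neg, norm_neg] at this
    rw [Real.norm_eq_abs, abs_le]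
    exact ⟨by linarith, (hg_le z).trans (hC z)⟩
  set w := (InnerProductSpace.toDual ℝ H).symm (g.mkContinuous C hg_bound)
  have hw : ∀ z, ⟪w, z⟫ = g z := fun z => InnerProductSpace.toDual_symm_apply
  exact ⟨w, fun z => (hw z).trans_le (hg_le z), (hw v).trans hgv⟩

end Subgradient

theorem apply_add_smul_le_of_clarkeDir_le {H : Type*} [NormedAddCommGroup H]
    [InnerProductSpace ℝ H] {f : H → ℝ} {x v : H} {t c : ℝ} (ht : 0 ≤ t)
    (hf : ∀ s ∈ Icc 0 t, LocallyLipschitzNear f (x + s • v))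
    (hc : ∀ s ∈ Ico 0 t, clarkeDir f (x + s • v) v ≤ c) :
    f (x + t • v) ≤ f x + t * c := by
  set g := fun s : ℝ => f (x + s • v)
  have hg : ContinuousOn g (Icc 0 t) := fun s hs =>
    have hline : ContinuousAt (fun s : ℝ => x + s • v) s := by fun_prop
    ((hf s hs).continuousAt.comp_of_eq hline rfl).continuousWithinAt
  have hslope : ∀ s ∈ Ico 0 t, ∀ r, c < r → ∃ᶠ z in 𝓝[>] s, slope g s z < r := by
    intro s hs r hr
    have hquot := (hf s (Ico_subset_Icc_self hs)).eventually_lt_of_clarkeDir_lt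
      ((hc s hs).trans_lt hr)
    have hmap : map (s + ·) (𝓝[>] (0 : ℝ)) = 𝓝[>] s := by simp
    rw [← hmap, frequently_map]
    refine (hquot.mono fun h hh => ?_).frequently
    simpa [g, slope_def_field, add_smul, add_assoc] using hh
  have := image_le_of_liminf_slope_right_le_deriv_boundary hg (B := fun s => f x + s * c)
    (by simp [g]) (by fun_prop) (fun s _ => ((hasDerivWithinAt_id s _).mul_const c).const_add _)
    (by simpa using hslope) (right_mem_Icc.2 ht)
  simpa [g] using this

theorem real_inner_le_neg_norm_sq_of_neg_mem_of_norm_le {F : Type*} [NormedAddCommGroup F]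
    [InnerProductSpace ℝ F] {S : Set F} (hS : Convex ℝ S) {v : F} (hv : -v ∈ S)
    (hmin : ∀ w ∈ S, ‖v‖ ≤ ‖w‖) {w : F} (hw : w ∈ S) : ⟪w, v⟫ ≤ -‖v‖ ^ 2 := by
  have : Nonempty S := ⟨⟨-v, hv⟩⟩
  have hproj : ‖(0 : F) - -v‖ = ⨅ u : S, ‖(0 : F) - u‖ := by
    refine le_antisymm (le_ciInf fun u => by simpa using hmin u u.2) ?_
    exact ciInf_le (f := fun u : S => ‖(0 : F) - u‖)
      ⟨0, forall_mem_range.2 fun _ => norm_nonneg _⟩ ⟨-v, hv⟩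
  have := (norm_eq_iInf_iff_real_inner_le_zero hS hv).1 hproj w hw
  rw [zero_sub, neg_neg, sub_neg_eq_add, inner_add_right, real_inner_self_eq_norm_sq,
    real_inner_comm] at this
  linarith

section Subdifferentials

variable {H : Type*} [NormedAddCommGroup H] [InnerProductSpace ℝ H]

theorem clarkeSubdiff_subset_goldsteinSubdiff (f : H → ℝ) {ε : ℝ} {x y : H}
    (hy : y ∈ closedBall x ε) : clarkeSubdiff f y ⊆ goldsteinSubdiff f ε x :=
  fun _ hw => subset_closure (subset_convexHull ℝ _ (mem_biUnion hy hw))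

theorem goldsteinSubdiff_subset_multiSubdiff {k : ℕ} (f : Fin k → H → ℝ) (ε : ℝ) (x : H)
    (i : Fin k) : goldsteinSubdiff (f i) ε x ⊆ multiSubdiff f ε x :=
  fun _ hw => subset_closure (subset_convexHull ℝ _ (mem_iUnion.2 ⟨i, hw⟩))

theorem convex_multiSubdiff {k : ℕ} (f : Fin k → H → ℝ) (ε : ℝ) (x : H) :
    Convex ℝ (multiSubdiff f ε x) :=
  (convex_convexHull ℝ _).closure

end Subdifferentials

theorem stmt11_general {H : Type*} [NormedAddCommGroup H] [InnerProductSpace ℝ H] [CompleteSpace H]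
    {k : ℕ} (f : Fin k → H → ℝ)
    (hlip : ∀ i, ∀ y : H, LocallyLipschitzNear (f i) y)
    (x : H) (ε : ℝ) (vbar : H)
    (hmem : -vbar ∈ multiSubdiff f ε x)
    (hmin : ∀ w ∈ multiSubdiff f ε x, ‖vbar‖ ≤ ‖w‖) :
    ∀ t : ℝ, 0 ≤ t → t * ‖vbar‖ ≤ ε →
      ∀ i : Fin k, f i (x + t • vbar) ≤ f i x - t * ‖vbar‖ ^ 2 := by
  intro t ht htε i
  rcases eq_or_ne vbar 0 with rfl | hv
  · simp
  have hdir : ∀ s ∈ Ico 0 t, clarkeDir (f i) (x + s • vbar) vbar ≤ -‖vbar‖ ^ 2 := by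
    intro s hs
    have hy : x + s • vbar ∈ closedBall x ε := by
      rw [mem_closedBall, dist_eq_norm, add_sub_cancel_left, norm_smul,
        Real.norm_of_nonneg hs.1]
      exact (mul_le_mul_of_nonneg_right hs.2.le (norm_nonneg _)).trans htε
    obtain ⟨w, hw, hwv⟩ := (hlip i _).exists_mem_clarkeSubdiff_inner_eq hv
    rw [← hwv]
    exact real_inner_le_neg_norm_sq_of_neg_mem_of_norm_le (convex_multiSubdiff f ε x) hmem hmin
      (goldsteinSubdiff_subset_multiSubdiff f ε x i
        (clarkeSubdiff_subset_goldsteinSubdiff (f i) hy hw))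
  have := apply_add_smul_le_of_clarkeDir_le ht (fun s _ => hlip i _) hdir
  linarith

/-- Guaranteed descent along the negative minimal-norm element of `F_ε(x)` up to step size
`ε/‖v̄‖`. -/
theorem stmt11 {H : Type*} [NormedAddCommGroup H] [InnerProductSpace ℝ H] [CompleteSpace H]
    {k : ℕ} (f : Fin k → H → ℝ)
    (hlip : ∀ i, ∀ y : H, LocallyLipschitzNear (f i) y)
    (x : H) (ε : ℝ) (hε : 0 ≤ ε) (vbar : H)
    (hmem : -vbar ∈ multiSubdiff f ε x)
    (hmin : ∀ w ∈ multiSubdiff f ε x, ‖vbar‖ ≤ ‖w‖) :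
    ∀ t : ℝ, 0 ≤ t → t * ‖vbar‖ ≤ ε →
      ∀ i : Fin k, f i (x + t • vbar) ≤ f i x - t * ‖vbar‖ ^ 2 :=
  stmt11_general f hlip x ε vbar hmem hmin
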